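/- arXiv:2007.14554 — 4 statements merged into one kernel-verified Lean document; each statement's English description precedes it below -/
import Mathlib

section
/- Let 0 < ζ₁ ≤ 1 and ζ₂ ≥ 0. Define the sequence P₁ = 0 and P_m = ((m-1)/m)·[(1-ζ₁)·P_{m-1} + ζ₁ζ₂] for m ≥ 2. Then for all m ≥ 1, P_m = (1/m)·(ζ₂/ζ₁)·(m·ζ₁ + (1-ζ₁)^m - 1). -/
theorem stmt_0 (ζ₁ ζ₂ : ℝ) (h1 : 0 < ζ₁) (h1' : ζ₁ ≤ 1) (h2 : 0 ≤ ζ₂)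
    (P : ℕ → ℝ) (hP1 : P 1 = 0)
    (hPrec : ∀ m : ℕ, 2 ≤ m →
      P m = (((m : ℝ) - 1) / m) * ((1 - ζ₁) * P (m - 1) + ζ₁ * ζ₂)) :
    ∀ m : ℕ, 1 ≤ m →
      P m = (1 / (m : ℝ)) * (ζ₂ / ζ₁) * ((m : ℝ) * ζ₁ + (1 - ζ₁) ^ m - 1) := by
  intro m hm
  induction m with
  | zero => omega
  | succ n ih =>
    rcases Nat.eq_or_lt_of_le hm with h | h
    · simp [← h, hP1]
    · have hn1 : 1 ≤ n := by omega
      have ihn := ih hn1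
      have hrec := hPrec (n + 1) (by omega)
      simp only [Nat.add_sub_cancel] at hrec
      rw [hrec, ihn]
      have hn0 : (n : ℝ) ≠ 0 := Nat.cast_ne_zero.mpr (by omega)
      have hn10 : ((n : ℝ) + 1) ≠ 0 := by positivity
      push_cast
      field_simp
      ring
end

section
/- For 0 < ζ₁ ≤ 1 and ζ₂ ≥ 0, the conditional-nulling error probability satisfies P_m^CN(ζ₁,ζ₂) ≤ (1/2)·(m-1)·ζ₁·ζ₂ for all m ≥ 1. -/
/-! The quadratic Taylor polynomial `1 - m x + m(m-1)/2 x²` of `(1 - x)^m` lies above it for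
`0 ≤ x ≤ 1` and below it for `x ≤ 0`, so `x · (1 - x)^m ≤ x · taylor` for all `x ≤ 1`. By induction:
multiplying by `1 - x ≥ 0` keeps the sign, and the new error term is `-m(m-1)/2 · x⁴ ≤ 0`.
Multiplying the resulting bound on `x · (m x + (1 - x)^m - 1)` by `ζ₂ / (m ζ₁²) ≥ 0` gives the
estimate. -/

lemma mul_one_sub_pow_le_mul_quadratic {x : ℝ} (hx : x ≤ 1) (n : ℕ) :
    x * (1 - x) ^ n ≤ x * (1 - n * x + n * (n - 1) / 2 * x ^ 2) := by
  induction n with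
  | zero => simp
  | succ n ih =>
    have hcoeff : (0 : ℝ) ≤ n * (n - 1) := by
      rcases n with _ | n
      · simp
      · push_cast; nlinarith
    push_cast
    calc x * (1 - x) ^ (n + 1) = (1 - x) * (x * (1 - x) ^ n) := by ring
      _ ≤ (1 - x) * (x * (1 - n * x + n * (n - 1) / 2 * x ^ 2)) := by gcongr
      _ = x * (1 - (n + 1) * x + (n + 1) * (n + 1 - 1) / 2 * x ^ 2) - n * (n - 1) / 2 * x ^ 4 := by
        ring
      _ ≤ x * (1 - (n + 1) * x + (n + 1) * (n + 1 - 1) / 2 * x ^ 2) :=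
        sub_le_self _ (mul_nonneg (div_nonneg hcoeff zero_le_two) (by positivity))

theorem stmt_3_general (ζ₁ ζ₂ : ℝ) (h1' : ζ₁ ≤ 1) (h2 : 0 ≤ ζ₂) :
    ∀ m : ℕ, 1 ≤ m →
      (1 / (m : ℝ)) * (ζ₂ / ζ₁) * ((m : ℝ) * ζ₁ + (1 - ζ₁) ^ m - 1)
        ≤ (1 / 2) * ((m : ℝ) - 1) * ζ₁ * ζ₂ := by
  intro m hm
  rcases eq_or_ne ζ₁ 0 with rfl | hζ₁
  · simp
  have hm₀ : (m : ℝ) ≠ 0 := by positivity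
  have hbound : ζ₁ * (m * ζ₁ + (1 - ζ₁) ^ m - 1) ≤ ζ₁ * (m * (m - 1) / 2 * ζ₁ ^ 2) := by
    linarith [mul_one_sub_pow_le_mul_quadratic h1' m]
  calc (1 / (m : ℝ)) * (ζ₂ / ζ₁) * ((m : ℝ) * ζ₁ + (1 - ζ₁) ^ m - 1)
      = ζ₂ / (m * ζ₁ ^ 2) * (ζ₁ * (m * ζ₁ + (1 - ζ₁) ^ m - 1)) := by field_simp
    _ ≤ ζ₂ / (m * ζ₁ ^ 2) * (ζ₁ * (m * (m - 1) / 2 * ζ₁ ^ 2)) := by gcongr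
    _ = (1 / 2) * ((m : ℝ) - 1) * ζ₁ * ζ₂ := by field_simp

theorem stmt_3 (ζ₁ ζ₂ : ℝ) (h1 : 0 < ζ₁) (h1' : ζ₁ ≤ 1) (h2 : 0 ≤ ζ₂) :
    ∀ m : ℕ, 1 ≤ m →
      (1 / (m : ℝ)) * (ζ₂ / ζ₁) * ((m : ℝ) * ζ₁ + (1 - ζ₁) ^ m - 1)
        ≤ (1 / 2) * ((m : ℝ) - 1) * ζ₁ * ζ₂ :=
  stmt_3_general ζ₁ ζ₂ h1' h2
end

section
/- For integer m ≥ 2, the function ζ ↦ P_H(m,ζ) = ((m-1)/m²)·(√(1+(m-1)ζ) - √(1-ζ))² is convex on [0,1]. -/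
open Set

lemma sqrt_comp_concave {s : Set ℝ} {h : ℝ → ℝ} (hh : ConcaveOn ℝ s h)
    (hnn : ∀ x ∈ s, 0 ≤ h x) : ConcaveOn ℝ s (fun x => Real.sqrt (h x)) := by
  refine ⟨hh.1, fun x hx y hy a b ha hb hab => ?_⟩
  have h1 : a • Real.sqrt (h x) + b • Real.sqrt (h y) ≤ Real.sqrt (a • h x + b • h y) :=
    Real.strictConcaveOn_sqrt.concaveOn.2 (hnn x hx) (hnn y hy) ha hb hab
  exact h1.trans (Real.sqrt_le_sqrt (by simpa using hh.2 hx hy ha hb hab))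

theorem stmt_6 (m : ℕ) (hm : 2 ≤ m) :
    ConvexOn ℝ (Set.Icc (0 : ℝ) 1) (fun ζ : ℝ =>
      (((m : ℝ) - 1) / (m : ℝ) ^ 2) *
        (Real.sqrt (1 + ((m : ℝ) - 1) * ζ) - Real.sqrt (1 - ζ)) ^ 2) := by
  set M : ℝ := (m : ℝ) with hM
  have hM2 : (2 : ℝ) ≤ M := by rw [hM]; exact_mod_cast hm
  set c : ℝ := (M - 1) / M ^ 2 with hc
  have hc0 : 0 ≤ c := by
    apply div_nonneg <;> nlinarith
  -- concave quadratic
  have hquad : ConcaveOn ℝ (Icc (0:ℝ) 1) (fun ζ : ℝ => (1 + (M - 1) * ζ) * (1 - ζ)) := by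
    have h1 : ConvexOn ℝ (univ : Set ℝ) (fun ζ : ℝ => (M - 1) • ζ ^ 2) :=
      (Even.convexOn_pow even_two).smul (by linarith)
    have h2 : ConcaveOn ℝ (univ : Set ℝ) (fun ζ : ℝ => -((M - 1) • ζ ^ 2)) := h1.neg
    have h3 : ConcaveOn ℝ (univ : Set ℝ) (fun ζ : ℝ => (M - 2) • (id ζ)) :=
      (concaveOn_id convex_univ).smul (by linarith)
    have h4 := (h2.add h3).add_const 1
    have h5 := h4.subset (subset_univ _) (convex_Icc 0 1)
    refine h5.congr fun ζ _ => ?_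
    simp only [Pi.add_apply, smul_eq_mul, id]
    ring
  have hnn : ∀ ζ ∈ Icc (0:ℝ) 1, 0 ≤ (1 + (M - 1) * ζ) * (1 - ζ) := by
    intro ζ hζ
    have := hζ.1; have := hζ.2
    apply mul_nonneg <;> nlinarith
  have hsqrt := sqrt_comp_concave hquad hnn
  have haff : ConvexOn ℝ (Icc (0:ℝ) 1) (fun ζ : ℝ => c * (2 + (M - 2) * ζ)) := by
    have h3 : ConvexOn ℝ (Icc (0:ℝ) 1) (fun ζ : ℝ => (c * (M - 2)) • (id ζ)) :=
      (convexOn_id (convex_Icc 0 1)).smul (by nlinarith)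
    refine (h3.add_const (c * 2)).congr fun ζ _ => ?_
    simp only [Pi.add_apply, smul_eq_mul, id]
    ring
  have hkey : ConvexOn ℝ (Icc (0:ℝ) 1) (fun ζ : ℝ =>
      c * (2 + (M - 2) * ζ) + -((2 * c) • Real.sqrt ((1 + (M - 1) * ζ) * (1 - ζ)))) :=
    haff.add (hsqrt.smul (by linarith)).neg
  refine hkey.congr fun ζ hζ => ?_
  have ha : (0:ℝ) ≤ 1 + (M - 1) * ζ := by nlinarith [hζ.1, hζ.2]
  have hb : (0:ℝ) ≤ 1 - ζ := by linarith [hζ.2]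
  have hsq : Real.sqrt (1 + (M - 1) * ζ) * Real.sqrt (1 - ζ)
      = Real.sqrt ((1 + (M - 1) * ζ) * (1 - ζ)) := (Real.sqrt_mul ha _).symm
  have e1 : Real.sqrt (1 + (M - 1) * ζ) ^ 2 = 1 + (M - 1) * ζ := Real.sq_sqrt ha
  have e2 : Real.sqrt (1 - ζ) ^ 2 = 1 - ζ := Real.sq_sqrt hb
  simp only [smul_eq_mul]
  nlinarith [hsq, e1, e2, sq_nonneg (Real.sqrt (1 + (M - 1) * ζ) - Real.sqrt (1 - ζ))]
end

section
/- For r_B, r_T ∈ [0,1] with r_B + r_T ≥ 1, one has 1 - √((1-r_B)(1-r_T)) - √(r_B·r_T) ≥ (√r_B - √r_T)², i.e., the quantum error exponent 2MN_S·(1 - √((1-r_B)(1-r_T)) - √(r_B r_T)) is at least the classical error exponent 2MN_S·(√r_B - √r_T)² for any M, N_S ≥ 0. -/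
theorem stmt_13 (r_B r_T : ℝ) (hB0 : 0 ≤ r_B) (hB1 : r_B ≤ 1) (hT0 : 0 ≤ r_T)
    (hT1 : r_T ≤ 1) (hsum : 1 ≤ r_B + r_T) :
    (Real.sqrt r_B - Real.sqrt r_T) ^ 2
      ≤ 1 - Real.sqrt ((1 - r_B) * (1 - r_T)) - Real.sqrt (r_B * r_T) ∧
    ∀ M N_S : ℝ, 0 ≤ M → 0 ≤ N_S →
      2 * M * N_S * (Real.sqrt r_B - Real.sqrt r_T) ^ 2
        ≤ 2 * M * N_S * (1 - Real.sqrt ((1 - r_B) * (1 - r_T)) - Real.sqrt (r_B * r_T)) := by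
  have hB1' : (0:ℝ) ≤ 1 - r_B := by linarith
  have hT1' : (0:ℝ) ≤ 1 - r_T := by linarith
  have hx : Real.sqrt r_B ^ 2 = r_B := Real.sq_sqrt hB0
  have hy : Real.sqrt r_T ^ 2 = r_T := Real.sq_sqrt hT0
  have hu : Real.sqrt (1 - r_B) ^ 2 = 1 - r_B := Real.sq_sqrt hB1'
  have hv : Real.sqrt (1 - r_T) ^ 2 = 1 - r_T := Real.sq_sqrt hT1'
  have hx0 : 0 ≤ Real.sqrt r_B := Real.sqrt_nonneg _
  have hy0 : 0 ≤ Real.sqrt r_T := Real.sqrt_nonneg _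
  have hu0 : 0 ≤ Real.sqrt (1 - r_B) := Real.sqrt_nonneg _
  have hv0 : 0 ≤ Real.sqrt (1 - r_T) := Real.sqrt_nonneg _
  have hmul1 : Real.sqrt ((1 - r_B) * (1 - r_T))
      = Real.sqrt (1 - r_B) * Real.sqrt (1 - r_T) := Real.sqrt_mul hB1' _
  have hmul2 : Real.sqrt (r_B * r_T) = Real.sqrt r_B * Real.sqrt r_T :=
    Real.sqrt_mul hB0 _
  have hge : Real.sqrt (1 - r_B) * Real.sqrt (1 - r_T)
      ≤ Real.sqrt r_B * Real.sqrt r_T := by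
    rw [← hmul1, ← hmul2]
    apply Real.sqrt_le_sqrt
    nlinarith
  have key : (Real.sqrt r_B - Real.sqrt r_T) ^ 2
      ≤ 1 - Real.sqrt ((1 - r_B) * (1 - r_T)) - Real.sqrt (r_B * r_T) := by
    rw [hmul1, hmul2]
    nlinarith [mul_nonneg (sub_nonneg.2 hge)
        (by nlinarith [sq_nonneg (Real.sqrt r_B - Real.sqrt r_T),
          sq_nonneg (Real.sqrt (1 - r_B) - Real.sqrt (1 - r_T))] :
          0 ≤ 1 - (Real.sqrt r_B * Real.sqrt r_T
            + Real.sqrt (1 - r_B) * Real.sqrt (1 - r_T)))]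
  refine ⟨key, fun M N_S hM hN => ?_⟩
  have : 0 ≤ 2 * M * N_S := by positivity
  exact mul_le_mul_of_nonneg_left key this
end
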